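/- arXiv:1511.03451 — 7 statements merged into one kernel-verified Lean document; each statement's English description precedes it below -/
import Mathlib

section
/- For every point (x,y) on the conic C_K, Φ⁻¹(Φ(x,y)) = (x,y); that is, the composition Φ⁻¹ ∘ Φ is the identity on C_K. -/
/-- The conic `C_K = {(x,y) ∈ K × K : x² + Hxy − Dy² = 1}`. -/
def conic {K : Type*} [Field K] (H D : K) : Set (K × K) :=
  {P | P.1 ^ 2 + H * P.1 * P.2 - D * P.2 ^ 2 = 1}

open scoped Classical

/-- The parametrization map `Φ : C_K → P_K`, where `P_K = K ∪ {α}` is realized as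
`Option K` with `α = none`: `Φ(x,y) = (1+x)/y` if `y ≠ 0`, `Φ(1,0) = α`,
`Φ(−1,0) = −H/2`. -/
noncomputable def conicPhi {K : Type*} [Field K] (H : K) (P : K × K) : Option K :=
  if P.2 = 0 then (if P.1 = 1 then none else some (-H / 2))
  else some ((1 + P.1) / P.2)

/-- The inverse parametrization `Φ⁻¹ : P_K → C_K`:
`Φ⁻¹(m) = ((m²+D)/(m²+Hm−D), (2m+H)/(m²+Hm−D))` for `m ∈ K` and `Φ⁻¹(α) = (1,0)`. -/
def conicPhiInv {K : Type*} [Field K] (H D : K) : Option K → K × K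
  | none => (1, 0)
  | some m => ((m ^ 2 + D) / (m ^ 2 + H * m - D), (2 * m + H) / (m ^ 2 + H * m - D))

/-- for every point `(x,y)` on the conic `C_K`,
`Φ⁻¹(Φ(x,y)) = (x,y)`; that is, `Φ⁻¹ ∘ Φ` is the identity on `C_K`. -/
theorem phiInv_phi_id {K : Type*} [Field K] (H D : K)
    (h2 : (2 : K) ≠ 0)
    (hirr : ∀ t : K, t ^ 2 - H * t - D ≠ 0) :
    ∀ P ∈ conic H D, conicPhiInv H D (conicPhi H P) = P := by
  rintro ⟨x, y⟩ hP
  simp only [conic, Set.mem_setOf_eq] at hP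
  by_cases hy : y = 0
  · subst hy
    simp only [mul_zero, ne_eq, OfNat.ofNat_ne_zero, not_false_eq_true, zero_pow, sub_zero,
      add_zero] at hP
    by_cases hx : x = 1
    · simp [conicPhi, conicPhiInv, hx]
    · have hx' : x = -1 := by
        have h0 : (x - 1) * (x + 1) = 0 := by linear_combination hP
        rcases mul_eq_zero.1 h0 with h | h
        · exact absurd (sub_eq_zero.1 h) hx
        · linear_combination h
      have hden : (-H / 2) ^ 2 + H * (-H / 2) - D ≠ 0 := by
        intro h
        exact hirr (H / 2) (by linear_combination h)
      rw [show conicPhi H (x, 0) = some (-H / 2) by simp [conicPhi, hx]]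
      simp only [conicPhiInv]
      refine Prod.ext ?_ ?_ <;> simp only
      · rw [hx', div_eq_iff hden]; field_simp; ring
      · rw [div_eq_iff hden]; field_simp; ring
  · have hy2 : y ^ 2 ≠ 0 := pow_ne_zero 2 hy
    have hden : ((1 + x) / y) ^ 2 + H * ((1 + x) / y) - D ≠ 0 := by
      intro h
      exact hirr (-((1 + x) / y)) (by linear_combination h)
    have hE : ((1 + x) / y) ^ 2 + H * ((1 + x) / y) - D
        = ((1 + x) ^ 2 + H * (1 + x) * y - D * y ^ 2) / y ^ 2 := by
      field_simp
    have hE' : (1 + x) ^ 2 + H * (1 + x) * y - D * y ^ 2 ≠ 0 := by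
      intro h
      apply hden
      rw [hE, h, zero_div]
    rw [show conicPhi H (x, y) = some ((1 + x) / y) by simp [conicPhi, hy]]
    simp only [conicPhiInv]
    refine Prod.ext ?_ ?_ <;> simp only
    · have hN : ((1 + x) / y) ^ 2 + D = ((1 + x) ^ 2 + D * y ^ 2) / y ^ 2 := by
        field_simp
      rw [hN, hE, div_div_div_cancel_right₀ hy2, div_eq_iff hE']
      linear_combination (-(1 + x)) * hP
    · have hN : 2 * ((1 + x) / y) + H = (y * (2 * (1 + x) + H * y)) / y ^ 2 := by
        field_simp
      rw [hN, hE, div_div_div_cancel_right₀ hy2, div_eq_iff hE']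
      linear_combination (-y) * hP
end

section
/- The map Φ transforms the conic product into the parameter product: for all (x₁,y₁), (x₂,y₂) ∈ C_K, Φ((x₁,y₁) ⊙ (x₂,y₂)) = Φ(x₁,y₁) ⊙_P Φ(x₂,y₂). -/
/-- The conic product `(x₁,y₁) ⊙ (x₂,y₂) = (x₁x₂ + D y₁y₂, y₁x₂ + x₁y₂ + H y₁y₂)`. -/
def conicMul {K : Type*} [Field K] (H D : K) (P Q : K × K) : K × K :=
  (P.1 * Q.1 + D * P.2 * Q.2, P.2 * Q.1 + P.1 * Q.2 + H * P.2 * Q.2)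

open scoped Classical

/-- The parameter product `⊙_P` on `P_K = K ∪ {α}`: for `a, b ∈ K`,
`a ⊙_P b = (D + ab)/(H + a + b)` if `a + b ≠ −H`, `a ⊙_P b = α` if `a + b = −H`;
and `α` acts as identity. -/
noncomputable def paramMul {K : Type*} [Field K] (H D : K) : Option K → Option K → Option K
  | none, b => b
  | a, none => a
  | some a, some b => if a + b = -H then none else some ((D + a * b) / (H + a + b))

/-! Write `(x, y)` as `x + y t` in `A = K[t]/(t² − H t − D)`: `conicMul` is the multiplication
of `A`, conjugation is `t ↦ H − t`, and the conic consists of the elements of norm one.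
`Φ` inverts `w ↦ w / w̄` on lines `K w`: it sends `(m + t) / (m + H − t)` to `m`, and `1` (the
image of the line `K`) to `α`. Since `(m₁ + t)(m₂ + t) = (D + m₁ m₂) + (H + m₁ + m₂) t`, the
parameter product is the product of lines, and `Φ` is multiplicative because `w ↦ w / w̄` is.
When `m₁ + m₂ = −H` the product line is `K`; this is where the irreducibility of
`t² − H t − D` enters, since it makes `D + m₁ m₂ = −N(m₁ + t)` nonzero. -/

section

variable {K : Type*} [Field K] {H D : K}

/-- `z · w̄ = w` in `A`. -/
def IsConjQuotient (H D : K) (z w : K × K) : Prop :=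
  z.1 * (w.1 + H * w.2) - D * z.2 * w.2 = w.1 ∧ z.2 * w.1 - z.1 * w.2 = w.2

theorem IsConjQuotient.conicMul {z₁ z₂ w₁ w₂ : K × K} (h₁ : IsConjQuotient H D z₁ w₁)
    (h₂ : IsConjQuotient H D z₂ w₂) :
    IsConjQuotient H D (conicMul H D z₁ z₂) (conicMul H D w₁ w₂) := by
  obtain ⟨x₁, y₁⟩ := z₁
  obtain ⟨x₂, y₂⟩ := z₂
  obtain ⟨a₁, b₁⟩ := w₁
  obtain ⟨a₂, b₂⟩ := w₂
  obtain ⟨h₁, h₁'⟩ := h₁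
  obtain ⟨h₂, h₂'⟩ := h₂
  dsimp only at h₁ h₁' h₂ h₂'
  dsimp only [IsConjQuotient, _root_.conicMul]
  -- `z₁z₂ · conj(w₁w₂) − w₁w₂ = z₂w̄₂ · (z₁w̄₁ − w₁) + w₁ · (z₂w̄₂ − w₂)`, where `z₂w̄₂ = p + q t`
  set p := x₂ * (a₂ + H * b₂) - D * y₂ * b₂
  set q := y₂ * a₂ - x₂ * b₂
  constructor
  · linear_combination p * h₁ + D * q * h₁' + a₁ * h₂ + D * b₁ * h₂'
  · linear_combination q * h₁ + (p + H * q) * h₁' + b₁ * h₂ + (a₁ + H * b₁) * h₂'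

theorem IsConjQuotient.of_smul {z w : K × K} {c : K} (hc : c ≠ 0)
    (h : IsConjQuotient H D z (c • w)) : IsConjQuotient H D z w := by
  obtain ⟨h₁, h₂⟩ := h
  simp only [Prod.smul_fst, Prod.smul_snd, smul_eq_mul] at h₁ h₂
  constructor
  · exact mul_left_cancel₀ hc (by linear_combination h₁)
  · exact mul_left_cancel₀ hc (by linear_combination h₂)

theorem IsConjQuotient.eq_one {z : K × K} {k : K} (hk : k ≠ 0)
    (h : IsConjQuotient H D z (k, 0)) : z = (1, 0) := by
  obtain ⟨h₁, h₂⟩ := h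
  ext
  · exact mul_right_cancel₀ hk (by linear_combination h₁)
  · exact mul_right_cancel₀ hk (by linear_combination h₂)

theorem conicPhi_eq_none_iff {P : K × K} : conicPhi H P = none ↔ P = (1, 0) := by
  obtain ⟨x, y⟩ := P
  unfold conicPhi
  split_ifs <;> simp_all

theorem isConjQuotient_of_conicPhi_eq_some (h2 : (2 : K) ≠ 0) {P : K × K} {m : K}
    (hP : P ∈ conic H D) (h : conicPhi H P = some m) : IsConjQuotient H D P (m, 1) := by
  obtain ⟨x, y⟩ := P
  simp only [conic, Set.mem_ofPred_eq] at hP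
  unfold conicPhi at h
  split_ifs at h with hy hx <;> obtain rfl := Option.some_inj.mp h <;> dsimp only at hy
  · subst hy
    have hx_sq : (x - 1) * (x + 1) = 0 := by linear_combination hP
    obtain rfl : x = -1 :=
      eq_neg_of_add_eq_zero_left ((mul_eq_zero.mp hx_sq).resolve_left (sub_ne_zero.mpr hx))
    constructor
    · field_simp
      ring
    · ring
  · constructor
    · field_simp
      linear_combination hP
    · field_simp
      ring

theorem conicPhi_eq_some_of_isConjQuotient (h2 : (2 : K) ≠ 0) {P : K × K} {m : K}
    (h : IsConjQuotient H D P (m, 1)) : conicPhi H P = some m := by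
  obtain ⟨x, y⟩ := P
  obtain ⟨h₁, h₂⟩ := h
  dsimp only at h₁ h₂
  unfold conicPhi
  split_ifs with hy hx
  · subst hy hx
    exact absurd (by linear_combination -h₂) h2
  · subst hy
    obtain rfl : x = -1 := by linear_combination -h₂
    rw [Option.some_inj]
    field_simp
    linear_combination h₁
  · rw [Option.some_inj]
    field_simp
    linear_combination -h₂

theorem conicMul_one_left (Q : K × K) : conicMul H D (1, 0) Q = Q := by
  ext <;> simp [conicMul]

theorem conicMul_one_right (P : K × K) : conicMul H D P (1, 0) = P := by
  ext <;> simp [conicMul]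

theorem conicMul_mk_one_mk_one (m₁ m₂ : K) :
    conicMul H D (m₁, 1) (m₂, 1) = (D + m₁ * m₂, H + m₁ + m₂) := by
  ext <;> simp only [conicMul] <;> ring

theorem paramMul_none_left (b : Option K) : paramMul H D none b = b := by
  cases b <;> rfl

theorem paramMul_none_right (a : Option K) : paramMul H D a none = a := by
  cases a <;> rfl

end

/-- the map `Φ` transforms the conic product into the parameter
product: for all `(x₁,y₁), (x₂,y₂) ∈ C_K`,
`Φ((x₁,y₁) ⊙ (x₂,y₂)) = Φ(x₁,y₁) ⊙_P Φ(x₂,y₂)`. -/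
theorem phi_mul {K : Type*} [Field K] (H D : K)
    (h2 : (2 : K) ≠ 0)
    (hirr : ∀ t : K, t ^ 2 - H * t - D ≠ 0) :
    ∀ P ∈ conic H D, ∀ Q ∈ conic H D,
      conicPhi H (conicMul H D P Q) = paramMul H D (conicPhi H P) (conicPhi H Q) := by
  intro P hP Q hQ
  rcases hφP : conicPhi H P with _ | m₁
  · rw [conicPhi_eq_none_iff.mp hφP, conicMul_one_left, paramMul_none_left]
  rcases hφQ : conicPhi H Q with _ | m₂
  · rw [conicPhi_eq_none_iff.mp hφQ, conicMul_one_right, paramMul_none_right, hφP]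
  have hPQ := (isConjQuotient_of_conicPhi_eq_some h2 hP hφP).conicMul
    (isConjQuotient_of_conicPhi_eq_some h2 hQ hφQ)
  rw [conicMul_mk_one_mk_one] at hPQ
  dsimp only [paramMul]
  split_ifs with hsum
  · have hk : D + m₁ * m₂ ≠ 0 := fun hk => hirr (-m₁) (by linear_combination -hk + m₁ * hsum)
    rw [show H + m₁ + m₂ = 0 by linear_combination hsum] at hPQ
    exact conicPhi_eq_none_iff.mpr (hPQ.eq_one hk)
  · have hc : H + m₁ + m₂ ≠ 0 := fun hc => hsum (by linear_combination hc)
    have hscale : ((D + m₁ * m₂, H + m₁ + m₂) : K × K) =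
        (H + m₁ + m₂) • ((D + m₁ * m₂) / (H + m₁ + m₂), 1) := by
      ext <;> simp [mul_div_cancel₀ _ hc]
    rw [hscale] at hPQ
    exact conicPhi_eq_some_of_isConjQuotient h2 (hPQ.of_smul hc)
end

section
/- (P_K, ⊙_P) is a commutative group: ⊙_P is associative and commutative, α is the identity element, and the inverse of a ∈ K is −H − a (while α is its own inverse). -/
open scoped Classical

/-- `(P_K, ⊙_P)` is a commutative group: `⊙_P` is associative and
commutative, `α` is the identity element, and the inverse of `a ∈ K` is `−H − a`
(while `α` is its own inverse). -/
theorem param_comm_group {K : Type*} [Field K] (H D : K)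
    (h2 : (2 : K) ≠ 0)
    (hirr : ∀ t : K, t ^ 2 - H * t - D ≠ 0) :
    (∀ a b c : Option K,
      paramMul H D (paramMul H D a b) c = paramMul H D a (paramMul H D b c)) ∧
    (∀ a b : Option K, paramMul H D a b = paramMul H D b a) ∧
    (∀ a : Option K, paramMul H D none a = a ∧ paramMul H D a none = a) ∧
    (∀ a : K, paramMul H D (some a) (some (-H - a)) = none ∧
      paramMul H D (some (-H - a)) (some a) = none) ∧
    paramMul H D (none : Option K) none = none := by
  have key : ∀ b : K, D - H * b - b ^ 2 ≠ 0 := by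
    intro b hb
    exact hirr (-b) (by linear_combination -hb)
  refine ⟨?_, ?_, ?_, ?_, rfl⟩
  · -- associativity
    have hn1 : ∀ m : Option K, paramMul H D none m = m := by rintro (_ | m) <;> rfl
    have hn2 : ∀ m : Option K, paramMul H D m none = m := by rintro (_ | m) <;> rfl
    intro a b c
    rcases a with _ | a
    · rw [hn1, hn1]
    rcases b with _ | b
    · rw [hn2, hn1]
    rcases c with _ | c
    · rw [hn2, hn2]
    simp only [paramMul]
    by_cases hab : a + b = -H <;> by_cases hbc : b + c = -H
    · rw [if_pos hab, if_pos hbc]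
      simp only [paramMul]
      congr 1
      linear_combination hbc - hab
    · rw [if_pos hab, if_neg hbc]
      simp only [paramMul]
      have hden : H + b + c ≠ 0 := fun h => hbc (by linear_combination h)
      have hcond : a + (D + b * c) / (H + b + c) ≠ -H := by
        intro h
        apply key b
        have h' : (a + (D + b * c) / (H + b + c)) * (H + b + c) = -H * (H + b + c) := by
          rw [h]
        field_simp at h'
        linear_combination h' - (H + b + c) * hab
      rw [if_neg hcond]
      congr 1
      have hd2 : H + a + (D + b * c) / (H + b + c) ≠ 0 := fun h => hcond (by linear_combination h)
      have ha : a = -H - b := by linear_combination hab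
      subst ha
      rw [eq_div_iff hd2]
      field_simp
      ring
    · rw [if_neg hab, if_pos hbc]
      simp only [paramMul]
      have hden : H + a + b ≠ 0 := fun h => hab (by linear_combination h)
      have hcond : (D + a * b) / (H + a + b) + c ≠ -H := by
        intro h
        apply key b
        have h' : ((D + a * b) / (H + a + b) + c) * (H + a + b) = -H * (H + a + b) := by
          rw [h]
        field_simp at h'
        linear_combination h' - (H + a + b) * hbc
      rw [if_neg hcond]
      congr 1
      have hd1 : H + (D + a * b) / (H + a + b) + c ≠ 0 := fun h => hcond (by linear_combination h)
      have hc : c = -H - b := by linear_combination hbc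
      subst hc
      rw [div_eq_iff hd1]
      field_simp
      ring
    · rw [if_neg hab, if_neg hbc]
      simp only [paramMul]
      have hden1 : H + a + b ≠ 0 := fun h => hab (by linear_combination h)
      have hden2 : H + b + c ≠ 0 := fun h => hbc (by linear_combination h)
      by_cases h1 : (D + a * b) / (H + a + b) + c = -H
      · have e1 : D + a * b + (c + H) * (H + a + b) = 0 := by
          have h' : ((D + a * b) / (H + a + b) + c) * (H + a + b) = -H * (H + a + b) := by
            rw [h1]
          field_simp at h'
          linear_combination h'
        have h2' : a + (D + b * c) / (H + b + c) = -H := by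
          field_simp
          linear_combination e1
        rw [if_pos h1, if_pos h2']
      · have e1 : D + a * b + (c + H) * (H + a + b) ≠ 0 := by
          intro e
          apply h1
          field_simp
          linear_combination e
        have h2' : a + (D + b * c) / (H + b + c) ≠ -H := by
          intro h
          apply e1
          have h' : (a + (D + b * c) / (H + b + c)) * (H + b + c) = -H * (H + b + c) := by
            rw [h]
          field_simp at h'
          linear_combination h'
        rw [if_neg h1, if_neg h2']
        congr 1
        have hd1 : H + (D + a * b) / (H + a + b) + c ≠ 0 := fun h => h1 (by linear_combination h)
        have hd2 : H + a + (D + b * c) / (H + b + c) ≠ 0 := fun h => h2' (by linear_combination h)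
        field_simp
        ring
  · -- commutativity
    intro a b
    rcases a with _ | a <;> rcases b with _ | b <;> simp only [paramMul]
    have : b + a = a + b := add_comm b a
    rw [this, mul_comm b a, add_right_comm H b a]
  · intro a
    rcases a with _ | a <;> exact ⟨rfl, rfl⟩
  · intro a
    constructor <;> · simp only [paramMul]; rw [if_pos (by ring)]
end

section
/- The map Φ is injective on P*: for all (x₁,y₁), (x₂,y₂) ∈ P*, if (1+x₁)·y₁⁻¹ = (1+x₂)·y₂⁻¹ in ℤ/N then (x₁,y₁) = (x₂,y₂). -/
/-!
Write `m = (1 + x) y⁻¹`. From `m y = 1 + x` and `x² - D y² = 1` one gets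
`(m² - D) y² = 2 (1 + x)`, and hence `(m² - D) x = m² + D` and `(m² - D) y = 2 m`.
Since `D` is not a square modulo `p` or modulo `q`, `m² - D` is a unit of `ℤ/pq`,
so `x` and `y` are determined by `m`.
-/

namespace ZMod

lemma isUnit_of_isUnit_castHom_of_isUnit_castHom {m n : ℕ} [NeZero m] [NeZero n]
    {z : ZMod (m * n)} (hm : IsUnit (castHom (dvd_mul_right m n) (ZMod m) z))
    (hn : IsUnit (castHom (dvd_mul_left n m) (ZMod n) z)) : IsUnit z := by
  obtain ⟨k, rfl⟩ := natCast_zmod_surjective z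
  rw [map_natCast, isUnit_iff_coprime] at hm hn
  exact (isUnit_iff_coprime k (m * n)).mpr (hm.mul_right hn)

lemma isUnit_sq_sub_of_not_exists_sq {p q : ℕ} [Fact p.Prime] [Fact q.Prime] {D : ZMod (p * q)}
    (hDp : ¬ ∃ t : ZMod p, t ^ 2 = castHom (dvd_mul_right p q) (ZMod p) D)
    (hDq : ¬ ∃ t : ZMod q, t ^ 2 = castHom (dvd_mul_left q p) (ZMod q) D)
    (m : ZMod (p * q)) : IsUnit (m ^ 2 - D) := by
  apply isUnit_of_isUnit_castHom_of_isUnit_castHom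
  · rw [isUnit_iff_ne_zero, map_sub, map_pow, sub_ne_zero]
    exact fun h => hDp ⟨_, h⟩
  · rw [isUnit_iff_ne_zero, map_sub, map_pow, sub_ne_zero]
    exact fun h => hDq ⟨_, h⟩

end ZMod

section Conic

variable {R : Type*} [CommRing R] {D m x y : R}

lemma sq_sub_mul_fst_eq (hy : IsUnit y) (h : x ^ 2 - D * y ^ 2 = 1) (hm : m * y = 1 + x) :
    (m ^ 2 - D) * x = m ^ 2 + D :=
  (hy.pow 2).mul_right_cancel <| by linear_combination (x - 1) * (m * y + 1 + x) * hm + (x + 1) * h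

lemma sq_sub_mul_snd_eq (hy : IsUnit y) (h : x ^ 2 - D * y ^ 2 = 1) (hm : m * y = 1 + x) :
    (m ^ 2 - D) * y = 2 * m :=
  hy.mul_right_cancel <| by linear_combination (m * y + x - 1) * hm + h

end Conic

theorem phi_injective_general (p q : ℕ) (hp : p.Prime) (hq : q.Prime)
    (D : ZMod (p * q))
    (hDp : ¬ ∃ t : ZMod p, t ^ 2 = ZMod.castHom (dvd_mul_right p q) (ZMod p) D)
    (hDq : ¬ ∃ t : ZMod q, t ^ 2 = ZMod.castHom (dvd_mul_left q p) (ZMod q) D)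
    (x₁ x₂ y₁ y₂ : ZMod (p * q))
    (hy₁ : IsUnit y₁) (hy₂ : IsUnit y₂)
    (h₁ : x₁ ^ 2 - D * y₁ ^ 2 = 1) (h₂ : x₂ ^ 2 - D * y₂ ^ 2 = 1)
    (heq : (1 + x₁) * y₁⁻¹ = (1 + x₂) * y₂⁻¹) :
    x₁ = x₂ ∧ y₁ = y₂ := by
  have := Fact.mk hp
  have := Fact.mk hq
  set m := (1 + x₁) * y₁⁻¹
  have hm₁ : m * y₁ = 1 + x₁ := by rw [mul_assoc, ZMod.inv_mul_of_unit _ hy₁, mul_one]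
  have hm₂ : m * y₂ = 1 + x₂ := by rw [heq, mul_assoc, ZMod.inv_mul_of_unit _ hy₂, mul_one]
  have hu := ZMod.isUnit_sq_sub_of_not_exists_sq hDp hDq m
  exact ⟨hu.mul_left_cancel <|
      (sq_sub_mul_fst_eq hy₁ h₁ hm₁).trans (sq_sub_mul_fst_eq hy₂ h₂ hm₂).symm,
    hu.mul_left_cancel <|
      (sq_sub_mul_snd_eq hy₁ h₁ hm₁).trans (sq_sub_mul_snd_eq hy₂ h₂ hm₂).symm⟩

/-- the map `Φ(x,y) = (1+x)·y⁻¹` is injective on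
`P* = {(x,y) ∈ ℤ/N × (ℤ/N)ˣ : x² − Dy² = 1}`, where `N = pq`. -/
theorem phi_injective (p q : ℕ) (hp : p.Prime) (hq : q.Prime)
    (hpodd : Odd p) (hqodd : Odd q) (hpq : p ≠ q)
    (D : ZMod (p * q))
    (hDp : ¬ ∃ t : ZMod p, t ^ 2 = ZMod.castHom (dvd_mul_right p q) (ZMod p) D)
    (hDq : ¬ ∃ t : ZMod q, t ^ 2 = ZMod.castHom (dvd_mul_left q p) (ZMod q) D)
    (hDp' : ¬ ∃ t : ZMod p, t ^ 2 = ZMod.castHom (dvd_mul_right p q) (ZMod p) (-D))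
    (hDq' : ¬ ∃ t : ZMod q, t ^ 2 = ZMod.castHom (dvd_mul_left q p) (ZMod q) (-D))
    (x₁ x₂ y₁ y₂ : ZMod (p * q))
    (hy₁ : IsUnit y₁) (hy₂ : IsUnit y₂)
    (h₁ : x₁ ^ 2 - D * y₁ ^ 2 = 1) (h₂ : x₂ ^ 2 - D * y₂ ^ 2 = 1)
    (heq : (1 + x₁) * y₁⁻¹ = (1 + x₂) * y₂⁻¹) :
    x₁ = x₂ ∧ y₁ = y₂ :=
  phi_injective_general p q hp hq D hDp hDq x₁ x₂ y₁ y₂ hy₁ hy₂ h₁ h₂ heq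
end

section
/- The map Φ⁻¹ is injective on (ℤ/N)ˣ: for all units m₁, m₂ of ℤ/N, if ((m₁²+D)(m₁²−D)⁻¹, 2m₁(m₁²−D)⁻¹) = ((m₂²+D)(m₂²−D)⁻¹, 2m₂(m₂²−D)⁻¹) then m₁ = m₂. -/
/-- the map `Φ⁻¹(m) = ((m²+D)(m²−D)⁻¹, 2m(m²−D)⁻¹)` is injective
on the units of `ℤ/N`, where `N = pq`. -/
theorem phiInv_injective (p q : ℕ) (hp : p.Prime) (hq : q.Prime)
    (hpodd : Odd p) (hqodd : Odd q) (hpq : p ≠ q)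
    (D : ZMod (p * q))
    (hDp : ¬ ∃ t : ZMod p, t ^ 2 = ZMod.castHom (dvd_mul_right p q) (ZMod p) D)
    (hDq : ¬ ∃ t : ZMod q, t ^ 2 = ZMod.castHom (dvd_mul_left q p) (ZMod q) D)
    (hDp' : ¬ ∃ t : ZMod p, t ^ 2 = ZMod.castHom (dvd_mul_right p q) (ZMod p) (-D))
    (hDq' : ¬ ∃ t : ZMod q, t ^ 2 = ZMod.castHom (dvd_mul_left q p) (ZMod q) (-D))
    (m₁ m₂ : ZMod (p * q)) (hm₁ : IsUnit m₁) (hm₂ : IsUnit m₂)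
    (heq : ((m₁ ^ 2 + D) * (m₁ ^ 2 - D)⁻¹, 2 * m₁ * (m₁ ^ 2 - D)⁻¹)
        = ((m₂ ^ 2 + D) * (m₂ ^ 2 - D)⁻¹, 2 * m₂ * (m₂ ^ 2 - D)⁻¹)) :
    m₁ = m₂ := by
  haveI : NeZero (p * q) := ⟨Nat.mul_ne_zero hp.ne_zero hq.ne_zero⟩
  set fp := ZMod.castHom (dvd_mul_right p q) (ZMod p) with hfp
  set fq := ZMod.castHom (dvd_mul_left q p) (ZMod q) with hfq
  -- a general criterion for being a unit in ZMod (p*q)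
  have unit_of : ∀ a : ZMod (p * q), fp a ≠ 0 → fq a ≠ 0 → IsUnit a := by
    intro a h1 h2
    have ha : ((a.val : ℕ) : ZMod (p * q)) = a := ZMod.natCast_zmod_val a
    rw [← ha, ZMod.isUnit_iff_coprime]
    have hfp' : fp a = ((a.val : ℕ) : ZMod p) := by
      rw [← ha]; simp [hfp]
    have hfq' : fq a = ((a.val : ℕ) : ZMod q) := by
      rw [← ha]; simp [hfq]
    have hp1 : ¬ p ∣ a.val := fun hd => h1 (by
      rw [hfp']; exact (ZMod.natCast_eq_zero_iff _ _).mpr hd)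
    have hq1 : ¬ q ∣ a.val := fun hd => h2 (by
      rw [hfq']; exact (ZMod.natCast_eq_zero_iff _ _).mpr hd)
    exact Nat.Coprime.mul_right ((hp.coprime_iff_not_dvd.mpr hp1).symm)
      ((hq.coprime_iff_not_dvd.mpr hq1).symm)
  -- 2 is a unit
  have two_ne : ∀ (r : ℕ), r.Prime → Odd r → ((2 : ℕ) : ZMod r) ≠ 0 := by
    intro r hr hro h
    have hd := (ZMod.natCast_eq_zero_iff 2 r).mp h
    have : r = 2 := (Nat.prime_dvd_prime_iff_eq hr Nat.prime_two).mp hd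
    rw [this] at hro
    exact (Nat.not_odd_iff_even.mpr even_two) hro
  have h2u : IsUnit (2 : ZMod (p * q)) := by
    apply unit_of <;> rw [show ((2 : ZMod (p*q))) = ((2:ℕ) : ZMod (p*q)) by norm_cast]
    · rw [map_natCast]; exact two_ne p hp hpodd
    · rw [map_natCast]; exact two_ne q hq hqodd
  -- D is a unit
  have hDu : IsUnit D := by
    apply unit_of
    · intro h; exact hDp ⟨0, by simp [h]⟩
    · intro h; exact hDq ⟨0, by simp [h]⟩
  -- m² − D is a unit for any m
  have hsub : ∀ m : ZMod (p * q), IsUnit (m ^ 2 - D) := by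
    intro m
    apply unit_of
    · intro h
      rw [map_sub] at h
      exact hDp ⟨fp m, by rw [← map_pow]; linear_combination h⟩
    · intro h
      rw [map_sub] at h
      exact hDq ⟨fq m, by rw [← map_pow]; linear_combination h⟩
  have ha := hsub m₁
  have hb := hsub m₂
  obtain ⟨h1, h2⟩ := Prod.ext_iff.mp heq
  simp only at h1 h2
  -- clear inverses
  have hainv : (m₁ ^ 2 - D) * (m₁ ^ 2 - D)⁻¹ = 1 := ZMod.mul_inv_of_unit _ ha
  have hbinv : (m₂ ^ 2 - D) * (m₂ ^ 2 - D)⁻¹ = 1 := ZMod.mul_inv_of_unit _ hb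
  have H1 : (m₁ ^ 2 + D) * (m₂ ^ 2 - D) = (m₂ ^ 2 + D) * (m₁ ^ 2 - D) := by
    have := congrArg (· * ((m₁ ^ 2 - D) * (m₂ ^ 2 - D))) h1
    linear_combination this - (m₁^2+D)*(m₂^2-D)*hainv + (m₂^2+D)*(m₁^2-D)*hbinv
  have H2 : 2 * m₁ * (m₂ ^ 2 - D) = 2 * m₂ * (m₁ ^ 2 - D) := by
    have := congrArg (· * ((m₁ ^ 2 - D) * (m₂ ^ 2 - D))) h2
    linear_combination this - 2*m₁*(m₂^2-D)*hainv + 2*m₂*(m₁^2-D)*hbinv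
  -- from H1: m₁² = m₂²
  have hsq : m₁ ^ 2 = m₂ ^ 2 := by
    have h2D : IsUnit (2 * D) := h2u.mul hDu
    apply h2D.mul_left_cancel
    linear_combination -H1
  have H2' : 2 * m₁ * (m₁ ^ 2 - D) = 2 * m₂ * (m₁ ^ 2 - D) := by
    rw [hsq] at H2 ⊢; exact H2
  have := (h2u.mul ha).mul_left_cancel (by linear_combination H2' :
    (2 * (m₁ ^ 2 - D)) * m₁ = (2 * (m₁ ^ 2 - D)) * m₂)
  exact this
end

section
/- Φ and Φ⁻¹ map into the correct sets: for every unit m ∈ (ℤ/N)ˣ, the point Φ⁻¹(m) = ((m²+D)(m²−D)⁻¹, 2m(m²−D)⁻¹) belongs to P* (its second coordinate is a unit and its coordinates satisfy x² − Dy² = 1); and for every (x,y) ∈ P*, the element Φ(x,y) = (1+x)·y⁻¹ is a unit of ℤ/N. -/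
/-!
A residue modulo `p * q` is a unit exactly when it is nonzero modulo `p` and modulo `q`, so
everything is checked in the fields `ZMod p` and `ZMod q`. There `m² - D ≠ 0` because `D` is
not a square, and `1 + x ≠ 0` because `x = -1` would force `D y² = 0`. The conic identity is
the usual one for the parametrisation through `(-1, 0)`: `(m² + D)² - 4 D m² = (m² - D)²`.
-/

theorem ZMod.isUnit_iff_isUnit_castHom_mul {m n : ℕ} [NeZero (m * n)] (u : ZMod (m * n)) :
    IsUnit u ↔ IsUnit (ZMod.castHom (dvd_mul_right m n) (ZMod m) u) ∧
      IsUnit (ZMod.castHom (dvd_mul_left n m) (ZMod n) u) := by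
  rw [← ZMod.natCast_zmod_val u, map_natCast, map_natCast, ZMod.isUnit_iff_coprime,
    ZMod.isUnit_iff_coprime, ZMod.isUnit_iff_coprime, Nat.coprime_mul_iff_right]

theorem ZMod.isUnit_two_of_odd {n : ℕ} (hn : Odd n) : IsUnit (2 : ZMod n) := by
  exact_mod_cast (ZMod.isUnit_iff_coprime 2 n).2 (Nat.coprime_two_left.2 hn)

theorem ZMod.isUnit_inv_of_isUnit {n : ℕ} {u : ZMod n} (hu : IsUnit u) : IsUnit u⁻¹ :=
  .of_mul_eq_one u (ZMod.inv_mul_of_unit u hu)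

theorem sq_sub_mul_sq_eq_one_of_mul_eq_one {R : Type*} [CommRing R] {D m s : R}
    (hs : (m ^ 2 - D) * s = 1) : ((m ^ 2 + D) * s) ^ 2 - D * (2 * m * s) ^ 2 = 1 := by
  linear_combination ((m ^ 2 - D) * s + 1) * hs

theorem one_add_ne_zero_of_sq_sub_mul_sq_eq_one {R : Type*} [CommRing R] [NoZeroDivisors R]
    {D x y : R} (hD : D ≠ 0) (hy : y ≠ 0) (h : x ^ 2 - D * y ^ 2 = 1) : 1 + x ≠ 0 := by
  intro hx
  have : D * y ^ 2 = 0 := by linear_combination (x - 1) * hx - h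
  exact mul_ne_zero hD (pow_ne_zero 2 hy) this

theorem phi_phiInv_wellDefined_general (p q : ℕ) (hp : p.Prime) (hq : q.Prime)
    (hpodd : Odd p) (hqodd : Odd q)
    (D : ZMod (p * q))
    (hDp : ¬ ∃ t : ZMod p, t ^ 2 = ZMod.castHom (dvd_mul_right p q) (ZMod p) D)
    (hDq : ¬ ∃ t : ZMod q, t ^ 2 = ZMod.castHom (dvd_mul_left q p) (ZMod q) D) :
    (∀ m : ZMod (p * q), IsUnit m →
      IsUnit (2 * m * (m ^ 2 - D)⁻¹) ∧
      ((m ^ 2 + D) * (m ^ 2 - D)⁻¹) ^ 2 - D * (2 * m * (m ^ 2 - D)⁻¹) ^ 2 = 1) ∧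
    (∀ x y : ZMod (p * q), IsUnit y → x ^ 2 - D * y ^ 2 = 1 →
      IsUnit ((1 + x) * y⁻¹)) := by
  have : Fact p.Prime := ⟨hp⟩
  have : Fact q.Prime := ⟨hq⟩
  have : NeZero (p * q) := ⟨Nat.mul_ne_zero hp.ne_zero hq.ne_zero⟩
  set fp := ZMod.castHom (dvd_mul_right p q) (ZMod p)
  set fq := ZMod.castHom (dvd_mul_left q p) (ZMod q)
  have hunit (u : ZMod (p * q)) : IsUnit u ↔ fp u ≠ 0 ∧ fq u ≠ 0 := by
    simp only [ZMod.isUnit_iff_isUnit_castHom_mul, isUnit_iff_ne_zero, fp, fq]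
  have hsub (m : ZMod (p * q)) : IsUnit (m ^ 2 - D) := by
    simp only [hunit, map_sub, map_pow, sub_ne_zero]
    exact ⟨fun h => hDp ⟨_, h⟩, fun h => hDq ⟨_, h⟩⟩
  refine ⟨fun m hm => ⟨?_, ?_⟩, fun x y hy hxy => ?_⟩
  · exact ((ZMod.isUnit_two_of_odd (hpodd.mul hqodd)).mul hm).mul
      (ZMod.isUnit_inv_of_isUnit (hsub m))
  · exact sq_sub_mul_sq_eq_one_of_mul_eq_one (ZMod.mul_inv_of_unit _ (hsub m))
  · refine IsUnit.mul ?_ (ZMod.isUnit_inv_of_isUnit hy)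
    rw [hunit] at hy ⊢
    simp only [map_add, map_one]
    constructor
    · refine one_add_ne_zero_of_sq_sub_mul_sq_eq_one (D := fp D)
        (fun h => hDp ⟨0, by simp [h]⟩) hy.1 ?_
      simpa using congrArg fp hxy
    · refine one_add_ne_zero_of_sq_sub_mul_sq_eq_one (D := fq D)
        (fun h => hDq ⟨0, by simp [h]⟩) hy.2 ?_
      simpa using congrArg fq hxy

/-- `Φ` and `Φ⁻¹` map into the correct sets: for every unit
`m ∈ (ℤ/N)ˣ`, the point `Φ⁻¹(m) = ((m²+D)(m²−D)⁻¹, 2m(m²−D)⁻¹)` belongs to `P*`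
(its second coordinate is a unit and its coordinates satisfy `x² − Dy² = 1`);
and for every `(x,y) ∈ P*`, the element `Φ(x,y) = (1+x)·y⁻¹` is a unit of `ℤ/N`. -/
theorem phi_phiInv_wellDefined (p q : ℕ) (hp : p.Prime) (hq : q.Prime)
    (hpodd : Odd p) (hqodd : Odd q) (hpq : p ≠ q)
    (D : ZMod (p * q))
    (hDp : ¬ ∃ t : ZMod p, t ^ 2 = ZMod.castHom (dvd_mul_right p q) (ZMod p) D)
    (hDq : ¬ ∃ t : ZMod q, t ^ 2 = ZMod.castHom (dvd_mul_left q p) (ZMod q) D)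
    (hDp' : ¬ ∃ t : ZMod p, t ^ 2 = ZMod.castHom (dvd_mul_right p q) (ZMod p) (-D))
    (hDq' : ¬ ∃ t : ZMod q, t ^ 2 = ZMod.castHom (dvd_mul_left q p) (ZMod q) (-D)) :
    (∀ m : ZMod (p * q), IsUnit m →
      IsUnit (2 * m * (m ^ 2 - D)⁻¹) ∧
      ((m ^ 2 + D) * (m ^ 2 - D)⁻¹) ^ 2 - D * (2 * m * (m ^ 2 - D)⁻¹) ^ 2 = 1) ∧
    (∀ x y : ZMod (p * q), IsUnit y → x ^ 2 - D * y ^ 2 = 1 →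
      IsUnit ((1 + x) * y⁻¹)) :=
  phi_phiInv_wellDefined_general p q hp hq hpodd hqodd D hDp hDq
end

section
/- Rédei rational functions compute powers under the parameter product: for a field K, D, z ∈ K, and m, n ≥ 1 such that B_m(D,z) ≠ 0, B_n(D,z) ≠ 0, B_{m+n}(D,z) ≠ 0 and A_m(D,z)/B_m(D,z) + A_n(D,z)/B_n(D,z) ≠ 0, one has Q_m(D,z) ⊙_P Q_n(D,z) = Q_{m+n}(D,z), where Q_j(D,z) = A_j(D,z)/B_j(D,z) and a ⊙_P b = (D + ab)/(a + b). In particular, the n-fold ⊙_P-product of z with itself equals Q_n(D,z) whenever all intermediate products are defined. -/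
/-- The Rédei polynomial `A_n(D,z) = Σ_{k=0}^{⌊n/2⌋} C(n,2k) D^k z^{n−2k}`. -/
def redeiA {K : Type*} [Field K] (D z : K) (n : ℕ) : K :=
  ∑ k ∈ Finset.range (n / 2 + 1), (n.choose (2 * k) : K) * D ^ k * z ^ (n - 2 * k)

/-- The Rédei polynomial `B_n(D,z) = Σ_{k=0}^{⌊(n−1)/2⌋} C(n,2k+1) D^k z^{n−2k−1}`. -/
def redeiB {K : Type*} [Field K] (D z : K) (n : ℕ) : K :=
  ∑ k ∈ Finset.range ((n - 1) / 2 + 1),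
    (n.choose (2 * k + 1) : K) * D ^ k * z ^ (n - 2 * k - 1)

/-- The Rédei rational function `Q_n(D,z) = A_n(D,z)/B_n(D,z)`. -/
def redeiQ {K : Type*} [Field K] (D z : K) (n : ℕ) : K :=
  redeiA D z n / redeiB D z n

/-- The parameter product `a ⊙_P b = (D + ab)/(a + b)`. -/
def pmul {K : Type*} [Field K] (D a b : K) : K :=
  (D + a * b) / (a + b)

/-- Iterated `⊙_P`-products of `z` with itself: `redeiPPow D z k` is the
`(k+1)`-fold `⊙_P`-product of `z`, so `redeiPPow D z 0 = z`. -/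
def redeiPPow {K : Type*} [Field K] (D z : K) : ℕ → K
  | 0 => z
  | k + 1 => pmul D (redeiPPow D z k) z

open Finset in
lemma redeiA_ext {K : Type*} [Field K] (D z : K) (n : ℕ) :
    redeiA D z n = ∑ k ∈ range (n + 1), (n.choose (2 * k) : K) * D ^ k * z ^ (n - 2 * k) := by
  unfold redeiA
  apply Finset.sum_subset
  · intro k hk
    simp only [mem_range] at *
    omega
  · intro k hk hk'
    simp only [mem_range] at hk hk'
    rw [Nat.choose_eq_zero_of_lt (by omega)]
    simp

open Finset in
lemma redeiB_ext {K : Type*} [Field K] (D z : K) (n : ℕ) :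
    redeiB D z n = ∑ k ∈ range (n + 1), (n.choose (2 * k + 1) : K) * D ^ k * z ^ (n - 2 * k - 1) := by
  unfold redeiB
  apply Finset.sum_subset
  · intro k hk
    simp only [mem_range] at *
    omega
  · intro k hk hk'
    simp only [mem_range] at hk hk'
    rw [Nat.choose_eq_zero_of_lt (by omega)]
    simp

open Finset in
lemma redeiB_succ {K : Type*} [Field K] (D z : K) (n : ℕ) :
    redeiB D z (n + 1) = redeiA D z n + z * redeiB D z n := by
  rw [redeiA_ext, redeiB_ext, redeiB_ext, Finset.mul_sum,
    Finset.sum_range_succ _ (n + 1), ← Finset.sum_add_distrib]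
  have hz : ((n+1).choose (2 * (n+1) + 1) : K) = 0 := by
    rw [Nat.choose_eq_zero_of_lt (by omega)]; push_cast; ring
  rw [hz]
  simp only [zero_mul, add_zero]
  apply Finset.sum_congr rfl
  intro k hk
  simp only [mem_range] at hk
  have hP : ((n+1).choose (2*k+1) : K) = (n.choose (2*k) : K) + (n.choose (2*k+1) : K) := by
    rw [Nat.choose_succ_succ]; push_cast; ring
  have e1 : n + 1 - 2*k - 1 = n - 2*k := by omega
  rw [hP, e1, add_mul, add_mul]
  congr 1
  rcases le_or_gt (2*k+1) n with h | h
  · have e2 : z ^ (n - 2*k) = z ^ (n - 2*k - 1) * z := by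
      rw [← pow_succ]; congr 1; omega
    rw [e2]; ring
  · rw [Nat.choose_eq_zero_of_lt h]
    push_cast; ring

open Finset in
lemma redeiA_succ {K : Type*} [Field K] (D z : K) (n : ℕ) :
    redeiA D z (n + 1) = z * redeiA D z n + D * redeiB D z n := by
  rw [redeiA_ext, redeiA_ext, redeiB_ext]
  set f : ℕ → K := fun k => ((n+1).choose (2*k) : K) * D ^ k * z ^ (n+1 - 2*k) with hf
  set g : ℕ → K := fun k => (n.choose (2*k) : K) * D ^ k * z ^ (n - 2*k) with hg
  set h : ℕ → K := fun k => (n.choose (2*k+1) : K) * D ^ k * z ^ (n - 2*k - 1) with hh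
  have key : ∀ k ∈ range (n+1), f (k+1) = z * g (k+1) + D * h k := by
    intro k _
    simp only [hf, hg, hh]
    have hP : ((n+1).choose (2*(k+1)) : K)
        = (n.choose (2*k+1) : K) + (n.choose (2*k+2) : K) := by
      have e : 2*(k+1) = (2*k+1) + 1 := by ring
      rw [e, Nat.choose_succ_succ]; push_cast; ring
    rw [hP]
    rcases le_or_gt (2*k+2) n with hc | hc
    · have e1 : n + 1 - 2*(k+1) = n - 2*k - 1 := by omega
      have e2 : z ^ (n - 2*k - 1) = z ^ (n - 2*(k+1)) * z := by
        rw [← pow_succ]; congr 1; omega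
      rw [e1, e2, pow_succ]; ring
    · have hc2 : n.choose (2*k+2) = 0 := Nat.choose_eq_zero_of_lt (by omega)
      have hc2' : n.choose (2*(k+1)) = 0 := Nat.choose_eq_zero_of_lt (by omega)
      rcases eq_or_lt_of_le (show n ≤ 2*k+1 by omega) with h2 | h2
      · have e1 : n + 1 - 2*(k+1) = 0 := by omega
        have e3 : n - 2*k - 1 = 0 := by omega
        rw [e1, e3, hc2, hc2', pow_succ]
        push_cast; ring
      · have hc1 : n.choose (2*k+1) = 0 := Nat.choose_eq_zero_of_lt h2
        rw [hc1, hc2, hc2']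
        push_cast; ring
  have h1 : ∑ k ∈ range (n+2), f k = (∑ k ∈ range (n+1), f (k+1)) + f 0 :=
    Finset.sum_range_succ' f (n+1)
  have h2 : ∑ k ∈ range (n+1), f (k+1)
      = (∑ k ∈ range (n+1), z * g (k+1)) + ∑ k ∈ range (n+1), D * h k := by
    rw [← Finset.sum_add_distrib]
    exact Finset.sum_congr rfl key
  have h3 : ∑ k ∈ range (n+1), z * g k
      = (∑ k ∈ range n, z * g (k+1)) + z * g 0 :=
    Finset.sum_range_succ' _ n
  have h4 : ∑ k ∈ range (n+1), z * g (k+1)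
      = (∑ k ∈ range n, z * g (k+1)) + z * g (n+1) :=
    Finset.sum_range_succ _ n
  have hg0 : f 0 = z * g 0 := by
    simp only [hf, hg]; simp [pow_succ]; ring
  have hgn : g (n+1) = 0 := by
    simp only [hg]
    rw [Nat.choose_eq_zero_of_lt (by omega)]
    push_cast; ring
  rw [Finset.mul_sum, Finset.mul_sum]
  rw [h1, h2, h3, h4, hgn, hg0]
  ring

lemma redeiA_zero {K : Type*} [Field K] (D z : K) : redeiA D z 0 = 1 := by
  simp [redeiA]

lemma redeiB_zero {K : Type*} [Field K] (D z : K) : redeiB D z 0 = 0 := by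
  simp [redeiB]

lemma redeiA_one {K : Type*} [Field K] (D z : K) : redeiA D z 1 = z := by
  simp [redeiA]

lemma redeiB_one {K : Type*} [Field K] (D z : K) : redeiB D z 1 = 1 := by
  simp [redeiB]

lemma redei_add {K : Type*} [Field K] (D z : K) (m n : ℕ) :
    redeiA D z (m + n) = redeiA D z m * redeiA D z n + D * redeiB D z m * redeiB D z n ∧
    redeiB D z (m + n) = redeiA D z m * redeiB D z n + redeiB D z m * redeiA D z n := by
  induction n with
  | zero => simp [redeiA_zero, redeiB_zero]
  | succ n ih =>
    have h1 : m + (n + 1) = (m + n) + 1 := by omega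
    rw [h1, redeiA_succ, redeiB_succ, ih.1, ih.2, redeiA_succ, redeiB_succ]
    rw [ih.1, ih.2]
    constructor <;> ring

/-- Rédei rational functions compute powers under the parameter
product: if `B_m(D,z) ≠ 0`, `B_n(D,z) ≠ 0`, `B_{m+n}(D,z) ≠ 0` and
`Q_m(D,z) + Q_n(D,z) ≠ 0` (with `m, n ≥ 1`), then
`Q_m(D,z) ⊙_P Q_n(D,z) = Q_{m+n}(D,z)`. In particular, the `n`-fold
`⊙_P`-product of `z` with itself equals `Q_n(D,z)` whenever all intermediate
products are defined (i.e. `B_k(D,z) ≠ 0` for all `1 ≤ k ≤ n`). -/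
theorem redeiQ_param_pow {K : Type*} [Field K] (D z : K) :
    (∀ m n : ℕ, 1 ≤ m → 1 ≤ n →
      redeiB D z m ≠ 0 → redeiB D z n ≠ 0 → redeiB D z (m + n) ≠ 0 →
      redeiQ D z m + redeiQ D z n ≠ 0 →
      pmul D (redeiQ D z m) (redeiQ D z n) = redeiQ D z (m + n)) ∧
    (∀ n : ℕ, 1 ≤ n → (∀ k : ℕ, 1 ≤ k → k ≤ n → redeiB D z k ≠ 0) →
      redeiPPow D z (n - 1) = redeiQ D z n) := by
  have main : ∀ m n : ℕ,
      redeiB D z m ≠ 0 → redeiB D z n ≠ 0 → redeiB D z (m + n) ≠ 0 →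
      pmul D (redeiQ D z m) (redeiQ D z n) = redeiQ D z (m + n) := by
    intro m n hm hn hmn
    have hadd := redei_add D z m n
    have hs : redeiQ D z m + redeiQ D z n ≠ 0 := by
      rw [redeiQ, redeiQ, div_add_div _ _ hm hn]
      rw [show redeiA D z m * redeiB D z n + redeiB D z m * redeiA D z n
        = redeiB D z (m + n) from hadd.2.symm]
      exact div_ne_zero hmn (mul_ne_zero hm hn)
    have hnum : D + redeiQ D z m * redeiQ D z n
        = redeiA D z (m + n) / (redeiB D z m * redeiB D z n) := by
      rw [redeiQ, redeiQ, hadd.1]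
      field_simp
      ring
    have hden : redeiQ D z m + redeiQ D z n
        = redeiB D z (m + n) / (redeiB D z m * redeiB D z n) := by
      rw [redeiQ, redeiQ, hadd.2]
      field_simp
    rw [pmul, hnum, hden, div_div_div_cancel_right₀ (mul_ne_zero hm hn), redeiQ]
  refine ⟨fun m n _ _ hm hn hmn _ => main m n hm hn hmn, ?_⟩
  intro n
  induction n with
  | zero => intro h; omega
  | succ n ih =>
    intro _ hall
    rcases Nat.eq_zero_or_pos n with rfl | hn
    · simp [redeiPPow, redeiQ, redeiA_one, redeiB_one]
    · have hstep := main n 1 (hall n hn (by omega)) (by rw [redeiB_one]; exact one_ne_zero)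
        (hall (n+1) (by omega) (by omega))
      have hprev := ih hn (fun k hk1 hk2 => hall k hk1 (by omega))
      have e : n + 1 - 1 = (n - 1) + 1 := by omega
      rw [e, redeiPPow, hprev]
      rw [show redeiQ D z 1 = z by rw [redeiQ, redeiA_one, redeiB_one, div_one]] at hstep
      exact hstep
end
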